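/- arXiv:1808.01505 — 5 statements merged into one kernel-verified Lean document; each statement's English description precedes it below -/
import Mathlib

section
/- Let ζ ∈ ℂ³ with ζ·ζ = 0 and |ζ| ≠ 0, let ζ̂ = ζ/|ζ|, and set b = (λ⁰+μ⁰) Re(ζ̂), c = −((λ⁰+3μ⁰)/|ζ|) Re(ζ̂). Then u(x) = ((b·x) ζ̂ + c) e^{ζ·x} satisfies μ⁰ Δu + (λ⁰+μ⁰) ∇(∇·u) = 0. -/
/-!
Every component of `u` has the form `(a·x + B) e^{ζ·x}`, and this family is closed under `∂ₖ`,
which acts on the coefficients by `(a, B) ↦ (ζₖ a, aₖ + ζₖ B)`. Since `ζ·ζ = 0`, the Laplacian of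
such a function is `2 (ζ·a) e^{ζ·x}`, and since also `ζ·ζ̂ = 0`, the divergence of `u` is the pure
exponential `(b·ζ̂ + ζ·c) e^{ζ·x}`. For a unit isotropic vector `Re ζ̂ = (ζ̂ + conj ζ̂)/2` gives
`ζ̂·Re ζ̂ = 1/2`, hence `ζ·b = (λ⁰+μ⁰)|ζ|/2` and `b·ζ̂ + ζ·c = -μ⁰`, and the two terms of the Lamé
operator cancel.
-/

open Complex

/-- Partial derivative in the j-th coordinate direction. -/
noncomputable def pd (j : Fin 3) (f : (Fin 3 → ℝ) → ℂ) : (Fin 3 → ℝ) → ℂ :=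
  fun x => fderiv ℝ f x (Pi.single j 1)

/-- Hermitian norm of a vector in ℂ³. -/
noncomputable def hnorm (ζ : Fin 3 → ℂ) : ℝ :=
  Real.sqrt (∑ j : Fin 3, Complex.normSq (ζ j))

section

variable {ι : Type*} [Fintype ι]

noncomputable def ofRealDotCLM (a : ι → ℂ) : (ι → ℝ) →L[ℝ] ℂ :=
  ∑ j, a j • ofRealCLM.comp (ContinuousLinearMap.proj j)

@[simp]
lemma ofRealDotCLM_apply (a : ι → ℂ) (x : ι → ℝ) :
    ofRealDotCLM a x = a ⬝ᵥ (ofReal ∘ x) := by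
  simp [ofRealDotCLM, dotProduct]

lemma ofRealDotCLM_single [DecidableEq ι] (a : ι → ℂ) (k : ι) :
    ofRealDotCLM a (Pi.single k 1) = a k := by
  simp [ofRealDotCLM, Pi.single_apply, apply_ite]

noncomputable def affineMulExp (ζ a : ι → ℂ) (B : ℂ) (x : ι → ℝ) : ℂ :=
  (a ⬝ᵥ (ofReal ∘ x) + B) * exp (ζ ⬝ᵥ (ofReal ∘ x))

lemma affineMulExp_zero (ζ : ι → ℂ) (B : ℂ) (x : ι → ℝ) :
    affineMulExp ζ 0 B x = B * exp (ζ ⬝ᵥ (ofReal ∘ x)) := by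
  simp [affineMulExp]

lemma hasFDerivAt_affineMulExp (ζ a : ι → ℂ) (B : ℂ) (x : ι → ℝ) :
    HasFDerivAt (affineMulExp ζ a B)
      ((a ⬝ᵥ (ofReal ∘ x) + B) • exp (ζ ⬝ᵥ (ofReal ∘ x)) • ofRealDotCLM ζ
        + exp (ζ ⬝ᵥ (ofReal ∘ x)) • ofRealDotCLM a) x := by
  have hlin (v : ι → ℂ) :
      HasFDerivAt (fun y : ι → ℝ => v ⬝ᵥ (ofReal ∘ y)) (ofRealDotCLM v) x := by
    convert (ofRealDotCLM v).hasFDerivAt using 1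
    ext y
    simp
  exact ((hlin a).add_const B).mul (hlin ζ).cexp

lemma fderiv_affineMulExp_single [DecidableEq ι] (ζ a : ι → ℂ) (B : ℂ) (k : ι) (x : ι → ℝ) :
    fderiv ℝ (affineMulExp ζ a B) x (Pi.single k 1)
      = affineMulExp ζ (ζ k • a) (a k + ζ k * B) x := by
  rw [(hasFDerivAt_affineMulExp ζ a B x).fderiv]
  simp only [add_apply, smul_apply, ofRealDotCLM_single, affineMulExp, smul_dotProduct,
    smul_eq_mul]
  ring

lemma sum_affineMulExp {κ : Type*} (s : Finset κ) (ζ : ι → ℂ) (a : κ → ι → ℂ) (B : κ → ℂ) :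
    ∑ j ∈ s, affineMulExp ζ (a j) (B j) = affineMulExp ζ (∑ j ∈ s, a j) (∑ j ∈ s, B j) := by
  ext x
  simp only [Finset.sum_apply, affineMulExp, ← Finset.sum_mul, Finset.sum_add_distrib,
    sum_dotProduct]

lemma dotProduct_re_of_isotropic {w : ι → ℂ} (hw : w ⬝ᵥ w = 0) :
    w ⬝ᵥ (fun j => ((w j).re : ℂ)) = (∑ j, normSq (w j) : ℝ) / 2 := by
  have hre (j : ι) : w j * (w j).re = (w j * w j + normSq (w j)) / 2 := by
    rw [← mul_conj, ← mul_add, add_conj]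
    push_cast
    ring
  simp only [dotProduct, hre, ← Finset.sum_div, Finset.sum_add_distrib]
  rw [show ∑ j, w j * w j = 0 from hw]
  push_cast
  ring

lemma lame_coeff_eq_zero (lam mu H : ℂ) (hH : H ≠ 0) {w r : ι → ℂ}
    (hwr : w ⬝ᵥ r = 1 / 2) (i : ι) :
    2 * mu * ((H • w) ⬝ᵥ ((lam + mu) • r)) * w i
        + (lam + mu) * (H • w) i
          * (((lam + mu) • r) ⬝ᵥ w + (H • w) ⬝ᵥ ((-(lam + 3 * mu) / H) • r)) = 0 := by
  simp only [smul_dotProduct, dotProduct_smul, dotProduct_comm r w, hwr, Pi.smul_apply,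
    smul_eq_mul]
  field_simp
  ring

end

lemma pd_affineMulExp (ζ a : Fin 3 → ℂ) (B : ℂ) (k : Fin 3) :
    pd k (affineMulExp ζ a B) = affineMulExp ζ (ζ k • a) (a k + ζ k * B) :=
  funext (fderiv_affineMulExp_single ζ a B k)

lemma laplacian_affineMulExp (ζ a : Fin 3 → ℂ) (B : ℂ) (x : Fin 3 → ℝ) :
    ∑ j, pd j (pd j (affineMulExp ζ a B)) x
      = affineMulExp ζ ((ζ ⬝ᵥ ζ) • a) (2 * (ζ ⬝ᵥ a) + (ζ ⬝ᵥ ζ) * B) x := by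
  rw [← Finset.sum_apply]
  simp only [pd_affineMulExp, sum_affineMulExp]
  congr 2
  · simp only [smul_smul, ← Finset.sum_smul, dotProduct]
  · rw [dotProduct, dotProduct, Finset.mul_sum, Finset.sum_mul, ← Finset.sum_add_distrib]
    exact Finset.sum_congr rfl fun j _ => by simp only [Pi.smul_apply, smul_eq_mul]; ring

lemma div_affineMulExp (ζ w b c : Fin 3 → ℂ) :
    (fun y => ∑ j, pd j (affineMulExp ζ (w j • b) (c j)) y)
      = affineMulExp ζ ((ζ ⬝ᵥ w) • b) (b ⬝ᵥ w + ζ ⬝ᵥ c) := by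
  rw [← Finset.sum_fn]
  simp only [pd_affineMulExp, sum_affineMulExp]
  congr 1
  · simp only [smul_smul, ← Finset.sum_smul, dotProduct]
  · rw [dotProduct_comm, dotProduct, dotProduct, ← Finset.sum_add_distrib]
    simp only [Pi.smul_apply, smul_eq_mul]

lemma sum_normSq_div_hnorm {ζ : Fin 3 → ℂ} (h : hnorm ζ ≠ 0) :
    ∑ j, normSq (ζ j / hnorm ζ) = 1 := by
  have hsq : hnorm ζ ^ 2 = ∑ j, normSq (ζ j) :=
    Real.sq_sqrt (Finset.sum_nonneg fun _ _ => normSq_nonneg _)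
  simp only [normSq_div, normSq_ofReal, ← Finset.sum_div, ← hsq]
  field_simp

lemma dotProduct_div_hnorm_self {ζ : Fin 3 → ℂ} (hζ : ζ ⬝ᵥ ζ = 0) :
    (fun j => ζ j / hnorm ζ) ⬝ᵥ (fun j => ζ j / hnorm ζ) = 0 := by
  simp only [dotProduct, div_mul_div_comm, ← Finset.sum_div]
  rw [show ∑ j, ζ j * ζ j = 0 from hζ, zero_div]

lemma dotProduct_re_div_hnorm {ζ : Fin 3 → ℂ} (hζ : ζ ⬝ᵥ ζ = 0) (h : hnorm ζ ≠ 0) :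
    (fun j => ζ j / hnorm ζ) ⬝ᵥ (fun j => ((ζ j / hnorm ζ).re : ℂ)) = 1 / 2 := by
  rw [dotProduct_re_of_isotropic (dotProduct_div_hnorm_self hζ), sum_normSq_div_hnorm h]
  norm_num

lemma lame_affineMulExp (lam mu : ℂ) {ζ w : Fin 3 → ℂ} (β γ : Fin 3 → ℂ) (hζ : ζ ⬝ᵥ ζ = 0)
    (hw : ζ ⬝ᵥ w = 0) (x : Fin 3 → ℝ) (i : Fin 3) :
    mu * ∑ j, pd j (pd j (affineMulExp ζ (w i • β) (γ i))) x
        + (lam + mu) * pd i (fun y => ∑ j, pd j (affineMulExp ζ (w j • β) (γ j)) y) x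
      = (2 * mu * (ζ ⬝ᵥ β) * w i + (lam + mu) * ζ i * (β ⬝ᵥ w + ζ ⬝ᵥ γ))
          * exp (ζ ⬝ᵥ (ofReal ∘ x)) := by
  rw [laplacian_affineMulExp, div_affineMulExp, hζ, hw]
  simp only [zero_smul, zero_mul, add_zero, pd_affineMulExp, smul_zero, Pi.zero_apply, zero_add,
    affineMulExp_zero, dotProduct_smul, smul_eq_mul]
  ring

/-- let ζ·ζ = 0, |ζ| ≠ 0, ζ̂ = ζ/|ζ|, b = (λ⁰+μ⁰)Re(ζ̂),
c = −((λ⁰+3μ⁰)/|ζ|)Re(ζ̂). Then u(x) = ((b·x)ζ̂ + c)e^{ζ·x} solves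
μ⁰Δu + (λ⁰+μ⁰)∇(∇·u) = 0. -/
theorem stmt_4 (lam0 mu0 : ℝ) (ζ : Fin 3 → ℂ)
    (hζ : (∑ j : Fin 3, ζ j * ζ j) = 0)
    (hζ0 : hnorm ζ ≠ 0)
    (ζhat : Fin 3 → ℂ) (hζhat : ζhat = fun j => ζ j / (hnorm ζ : ℂ))
    (b c : Fin 3 → ℝ)
    (hb : b = fun j => (lam0 + mu0) * (ζhat j).re)
    (hc : c = fun j => -((lam0 + 3 * mu0) / hnorm ζ) * (ζhat j).re)
    (u : (Fin 3 → ℝ) → Fin 3 → ℂ)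
    (hu : u = fun x l =>
      ((∑ j : Fin 3, (b j : ℂ) * (x j : ℂ)) * ζhat l + (c l : ℂ))
        * Complex.exp (∑ j : Fin 3, ζ j * (x j : ℂ))) :
    ∀ x : Fin 3 → ℝ, ∀ i : Fin 3,
      (mu0 : ℂ) * (∑ j : Fin 3, pd j (pd j (fun y => u y i)) x)
        + ((lam0 : ℂ) + (mu0 : ℂ))
            * pd i (fun y => ∑ j : Fin 3, pd j (fun z => u z j) y) x = 0 := by
  intro x i
  set H : ℝ := hnorm ζ
  have hH : (H : ℂ) ≠ 0 := ofReal_ne_zero.mpr hζ0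
  have hζ_smul : ζ = (H : ℂ) • ζhat := by ext j; simp [hζhat, mul_div_cancel₀ _ hH]
  have hζhat_null : ζhat ⬝ᵥ ζhat = 0 := hζhat ▸ dotProduct_div_hnorm_self hζ
  have hζhat_re : ζhat ⬝ᵥ (fun j => ((ζhat j).re : ℂ)) = 1 / 2 :=
    hζhat ▸ dotProduct_re_div_hnorm hζ hζ0
  have hb' : (fun j => (b j : ℂ)) = ((lam0 : ℂ) + mu0) • fun j => ((ζhat j).re : ℂ) := by
    ext j; simp [hb]
  have hc' : (fun j => (c j : ℂ))
      = (-((lam0 : ℂ) + 3 * mu0) / (H : ℂ)) • fun j => ((ζhat j).re : ℂ) := by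
    ext j; simp [hc]; ring
  have hu' (l : Fin 3) :
      (fun y => u y l) = affineMulExp ζ (ζhat l • fun j => (b j : ℂ)) (c l) := by
    ext y
    simp only [hu, affineMulExp, smul_dotProduct, smul_eq_mul]
    simp only [dotProduct, Function.comp_apply]
    ring
  have hζ_ζhat : ζ ⬝ᵥ ζhat = 0 := by rw [hζ_smul, smul_dotProduct, hζhat_null, smul_zero]
  simp only [hu']
  rw [lame_affineMulExp (lam0 : ℂ) mu0 (fun j => (b j : ℂ)) (fun j => (c j : ℂ)) hζ hζ_ζhat,
    hb', hc', hζ_smul, lame_coeff_eq_zero _ _ _ hH hζhat_re, zero_mul]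
end

section
/- Under the assumptions of the previous construction (ζ·ζ = 0, ζ̂ = ζ/|ζ|, b = (λ⁰+μ⁰)Re(ζ̂), c = −((λ⁰+3μ⁰)/|ζ|)Re(ζ̂), u(x) = ((b·x)ζ̂ + c)e^{ζ·x}), the divergence satisfies ∇·u(x) = −μ⁰ e^{ζ·x}, using the fact that Re(ζ̂)·ζ̂ = 1/2 when ζ·ζ = 0. -/
open Complex

section RealDot

variable {ι : Type*} [Fintype ι]

noncomputable def realDotCLM (a : ι → ℂ) : (ι → ℝ) →L[ℝ] ℂ :=
  ∑ k, a k • ofRealCLM.comp (ContinuousLinearMap.proj k)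

theorem realDotCLM_apply (a : ι → ℂ) (y : ι → ℝ) :
    realDotCLM a y = ∑ k, a k * (y k : ℂ) := by
  simp [realDotCLM]

theorem realDotCLM_single [DecidableEq ι] (a : ι → ℂ) (j : ι) :
    realDotCLM a (Pi.single j 1) = a j := by
  simp [realDotCLM_apply, Pi.single_apply, apply_ite]

theorem hasFDerivAt_realDot (a : ι → ℂ) (x : ι → ℝ) :
    HasFDerivAt (fun y : ι → ℝ => ∑ k, a k * (y k : ℂ)) (realDotCLM a) x := by
  rw [show (fun y : ι → ℝ => ∑ k, a k * (y k : ℂ)) = realDotCLM a from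
    funext fun y => (realDotCLM_apply a y).symm]
  exact (realDotCLM a).hasFDerivAt

theorem sum_re_mul_self_of_sum_mul_self_eq_zero {ζ : ι → ℂ} (hζ : ∑ j, ζ j * ζ j = 0) :
    ∑ j, ((ζ j).re : ℂ) * ζ j = ((∑ j, normSq (ζ j) : ℝ) : ℂ) / 2 := by
  have h : ∀ z : ℂ, (z.re : ℂ) * z = (z * z + (normSq z : ℂ)) / 2 := fun z => by
    rw [re_eq_add_conj, ← mul_conj]; ring
  simp only [h, ← Finset.sum_div, Finset.sum_add_distrib, hζ, ofReal_sum, zero_add]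

end RealDot

theorem pd_affine_mul_exp (a : Fin 3 → ℂ) (v w : ℂ) (ζ : Fin 3 → ℂ) (j : Fin 3)
    (x : Fin 3 → ℝ) :
    pd j (fun y => ((∑ k, a k * (y k : ℂ)) * v + w) * exp (∑ k, ζ k * (y k : ℂ))) x
      = (a j * v + ((∑ k, a k * (x k : ℂ)) * v + w) * ζ j)
          * exp (∑ k, ζ k * (x k : ℂ)) := by
  have h : HasFDerivAt
      (fun y : Fin 3 → ℝ => ((∑ k, a k * (y k : ℂ)) * v + w) * exp (∑ k, ζ k * (y k : ℂ))) _ x :=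
    (((hasFDerivAt_realDot a x).mul_const v).add_const w).mul (hasFDerivAt_realDot ζ x).cexp
  rw [pd, h.fderiv]
  simp only [add_apply, smul_apply, realDotCLM_single, smul_eq_mul]
  ring

theorem sum_pd_affine_mul_exp (a v w ζ : Fin 3 → ℂ) (x : Fin 3 → ℝ) :
    ∑ l, pd l (fun y => ((∑ k, a k * (y k : ℂ)) * v l + w l) * exp (∑ k, ζ k * (y k : ℂ))) x
      = (∑ l, a l * v l + (∑ k, a k * (x k : ℂ)) * ∑ l, v l * ζ l + ∑ l, w l * ζ l)
          * exp (∑ k, ζ k * (x k : ℂ)) := by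
  rw [Finset.sum_congr rfl fun l _ => pd_affine_mul_exp a (v l) (w l) ζ l x]
  simp only [Fin.sum_univ_three]
  ring

theorem hnorm_sq (ζ : Fin 3 → ℂ) : hnorm ζ ^ 2 = ∑ j, normSq (ζ j) :=
  Real.sq_sqrt (Finset.sum_nonneg fun j _ => normSq_nonneg (ζ j))

theorem hnorm_pos {ζ : Fin 3 → ℂ} (hζ0 : ζ ≠ 0) : 0 < hnorm ζ := by
  obtain ⟨j, hj⟩ := Function.ne_iff.mp hζ0
  exact Real.sqrt_pos.mpr <| Finset.sum_pos' (fun j _ => normSq_nonneg (ζ j))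
    ⟨j, Finset.mem_univ j, normSq_pos.mpr hj⟩

theorem sum_re_div_hnorm_mul {ζ : Fin 3 → ℂ} (hζ : ∑ j, ζ j * ζ j = 0)
    (hζ0 : ζ ≠ 0) :
    ∑ j, ((ζ j / hnorm ζ).re : ℂ) * ζ j = hnorm ζ / 2 := by
  have hn : (hnorm ζ : ℂ) ≠ 0 := ofReal_ne_zero.mpr (hnorm_pos hζ0).ne'
  simp only [div_ofReal_re, ofReal_div, div_mul_eq_mul_div, ← Finset.sum_div,
    sum_re_mul_self_of_sum_mul_self_eq_zero hζ, ← hnorm_sq, ofReal_pow]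
  field_simp

theorem sum_re_div_hnorm_mul_div_hnorm {ζ : Fin 3 → ℂ} (hζ : ∑ j, ζ j * ζ j = 0) (hζ0 : ζ ≠ 0) :
    ∑ j, ((ζ j / hnorm ζ).re : ℂ) * (ζ j / hnorm ζ) = 1 / 2 := by
  have hn : (hnorm ζ : ℂ) ≠ 0 := ofReal_ne_zero.mpr (hnorm_pos hζ0).ne'
  simp only [mul_div_assoc', ← Finset.sum_div, sum_re_div_hnorm_mul hζ hζ0]
  field_simp

/-- with ζ·ζ = 0, ζ ≠ 0, ζ̂ = ζ/|ζ|, b = (λ⁰+μ⁰)Re(ζ̂),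
c = −((λ⁰+3μ⁰)/|ζ|)Re(ζ̂) and u(x) = ((b·x)ζ̂ + c)e^{ζ·x}, one has
∇·u(x) = −μ⁰ e^{ζ·x}. -/
theorem stmt_5 (lam0 mu0 : ℝ) (ζ : Fin 3 → ℂ)
    (hζ : (∑ j : Fin 3, ζ j * ζ j) = 0)
    (hζ0 : ζ ≠ 0)
    (ζhat : Fin 3 → ℂ) (hζhat : ζhat = fun j => ζ j / (hnorm ζ : ℂ))
    (b c : Fin 3 → ℝ)
    (hb : b = fun j => (lam0 + mu0) * (ζhat j).re)
    (hc : c = fun j => -((lam0 + 3 * mu0) / hnorm ζ) * (ζhat j).re)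
    (u : (Fin 3 → ℝ) → Fin 3 → ℂ)
    (hu : u = fun x l =>
      ((∑ j : Fin 3, (b j : ℂ) * (x j : ℂ)) * ζhat l + (c l : ℂ))
        * Complex.exp (∑ j : Fin 3, ζ j * (x j : ℂ))) :
    ∀ x : Fin 3 → ℝ,
      (∑ j : Fin 3, pd j (fun y => u y j) x)
        = -(mu0 : ℂ) * Complex.exp (∑ j : Fin 3, ζ j * (x j : ℂ)) := by
  intro x
  subst hu
  rw [sum_pd_affine_mul_exp]
  have hn : (hnorm ζ : ℂ) ≠ 0 := ofReal_ne_zero.mpr (hnorm_pos hζ0).ne'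
  have hζhatζ : ∑ l, ζhat l * ζ l = 0 := by
    simp only [hζhat, div_mul_eq_mul_div, ← Finset.sum_div, hζ, zero_div]
  have hbζhat : ∑ l, (b l : ℂ) * ζhat l = (lam0 + mu0) / 2 := by
    simp only [hb, hζhat, ofReal_mul, mul_assoc, ← Finset.mul_sum,
      sum_re_div_hnorm_mul_div_hnorm hζ hζ0]
    push_cast; ring
  have hcζ : ∑ l, (c l : ℂ) * ζ l = -(lam0 + 3 * mu0) / 2 := by
    simp only [hc, hζhat, ofReal_mul, mul_assoc, ← Finset.mul_sum,
      sum_re_div_hnorm_mul hζ hζ0]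
    push_cast; field_simp
  rw [hζhatζ, hbζhat, hcζ]
  ring
end

section
/- For real numbers s, t with s² + t² ≠ 0, and ζ⁽¹⁾ = i(s,0,t) + (−t,0,s), ζ⁽²⁾ = i(s,0,t) − (−t,0,s), a = (0,1,0), and C a transversely isotropic tensor (satisfying the linear relations of transverse isotropy), the algebraic quantity C_{ijkl} a_i ζ⁽¹⁾_j a_k ζ⁽²⁾_l equals −(s²+t²)(C_{1212} + C_{1313}). -/
/-
Only the components `C₂ⱼ₂ₗ` with `j, l ∈ {1, 3}` meet `a = e₂` and the supports of `ζ⁽¹⁾, ζ⁽²⁾`.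
Each element of the symmetry group that is a signed permutation matrix acts on `C` by permuting
indices and multiplying by signs. The reflection `x₃ ↦ -x₃` kills the mixed components
`C₂₁₂₃` and `C₂₃₂₁`, and the quarter turn about `x₃` identifies `C₂₁₂₁ = C₁₂₁₂` and
`C₂₃₂₃ = C₁₃₁₃`. What remains is `C₁₂₁₂ ζ⁽¹⁾₁ ζ⁽²⁾₁ + C₁₃₁₃ ζ⁽¹⁾₃ ζ⁽²⁾₃`, and both products
equal `-(s² + t²)`. (Indices are 1-based here and 0-based in the code.)
-/

open Complex

/-- The symmetry group generators of transverse isotropy with axis x₃. -/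
def TIGroup : Set (Matrix (Fin 3) (Fin 3) ℝ) :=
  {Matrix.diagonal ![-1, 1, 1], Matrix.diagonal ![1, -1, 1], Matrix.diagonal ![1, 1, -1]}
    ∪ {Q | ∃ θ : ℝ, θ ∈ Set.Icc 0 (2 * Real.pi) ∧
        Q = !![Real.cos θ, -Real.sin θ, 0; Real.sin θ, Real.cos θ, 0; 0, 0, 1]}

section TensorTransform

variable {n R : Type*} [Fintype n] [CommSemiring R]

def tensorTransform (Q : Matrix n n R) (C : n → n → n → n → R) : n → n → n → n → R :=
  fun i j k l => ∑ p, ∑ q, ∑ r, ∑ s, Q i p * Q j q * Q k r * Q l s * C p q r s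

theorem tensorTransform_apply_of_signedPerm [DecidableEq n] {Q : Matrix n n R} (σ : n → n) (ε : n → R)
    (hQ : ∀ i p, Q i p = if σ i = p then ε i else 0) (C : n → n → n → n → R) (i j k l : n) :
    tensorTransform Q C i j k l = ε i * ε j * ε k * ε l * C (σ i) (σ j) (σ k) (σ l) := by
  simp only [tensorTransform, hQ, ite_mul, mul_ite, zero_mul, mul_zero, Finset.sum_ite_eq,
    Finset.mem_univ, if_true]

end TensorTransform

theorem reflection_three_mem_TIGroup : Matrix.diagonal ![(1 : ℝ), 1, -1] ∈ TIGroup :=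
  Or.inl (by simp)

theorem quarterTurn_mem_TIGroup : !![(0 : ℝ), -1, 0; 1, 0, 0; 0, 0, 1] ∈ TIGroup := by
  refine Or.inr ⟨Real.pi / 2, ⟨by positivity, by linarith [Real.pi_pos]⟩, ?_⟩
  simp

section TransverselyIsotropic

variable {C : Fin 3 → Fin 3 → Fin 3 → Fin 3 → ℝ}
  (hC : ∀ Q ∈ TIGroup, ∀ i j k l, tensorTransform Q C i j k l = C i j k l)
include hC

theorem eq_of_reflection_three (i j k l : Fin 3) :
    C i j k l = ![1, 1, -1] i * ![1, 1, -1] j * ![1, 1, -1] k * ![1, 1, -1] l * C i j k l :=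
  (hC _ reflection_three_mem_TIGroup i j k l).symm.trans <|
    tensorTransform_apply_of_signedPerm id ![1, 1, -1] (fun i p => Matrix.diagonal_apply _ i p) C i j k l

theorem eq_of_quarterTurn (i j k l : Fin 3) :
    C i j k l = ![-1, 1, 1] i * ![-1, 1, 1] j * ![-1, 1, 1] k * ![-1, 1, 1] l *
      C (![1, 0, 2] i) (![1, 0, 2] j) (![1, 0, 2] k) (![1, 0, 2] l) := by
  refine (hC _ quarterTurn_mem_TIGroup i j k l).symm.trans ?_
  refine tensorTransform_apply_of_signedPerm ![1, 0, 2] ![-1, 1, 1] (fun i p => ?_) C i j k l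
  fin_cases i <;> fin_cases p <;> simp

end TransverselyIsotropic

theorem stmt_10_general (s t : ℝ)
    (C : Fin 3 → Fin 3 → Fin 3 → Fin 3 → ℝ)
    (hinv : ∀ Q ∈ TIGroup, ∀ i j k l : Fin 3,
      (∑ p : Fin 3, ∑ q : Fin 3, ∑ r : Fin 3, ∑ s' : Fin 3,
        Q i p * Q j q * Q k r * Q l s' * C p q r s') = C i j k l)
    (ζ1 ζ2 a : Fin 3 → ℂ)
    (hζ1 : ζ1 = ![Complex.I * s - t, 0, Complex.I * t + s])
    (hζ2 : ζ2 = ![Complex.I * s + t, 0, Complex.I * t - s])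
    (ha : a = ![0, 1, 0]) :
    (∑ i : Fin 3, ∑ j : Fin 3, ∑ k : Fin 3, ∑ l : Fin 3,
        (C i j k l : ℂ) * a i * ζ1 j * a k * ζ2 l)
      = -((s ^ 2 + t ^ 2 : ℝ) : ℂ) * ((C 0 1 0 1 : ℝ) + (C 0 2 0 2 : ℝ)) := by
  have h1012 : C 1 0 1 2 = 0 := by simpa [self_eq_neg] using eq_of_reflection_three hinv 1 0 1 2
  have h1210 : C 1 2 1 0 = 0 := by simpa [self_eq_neg] using eq_of_reflection_three hinv 1 2 1 0
  have h1010 : C 1 0 1 0 = C 0 1 0 1 := by simpa using eq_of_quarterTurn hinv 1 0 1 0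
  have h1212 : C 1 2 1 2 = C 0 2 0 2 := by simpa using eq_of_quarterTurn hinv 1 2 1 2
  subst hζ1 hζ2 ha
  simp only [Fin.sum_univ_three, Matrix.cons_val_zero, Matrix.cons_val_one, Matrix.cons_val_two,
    Matrix.head_cons, Matrix.tail_cons]
  rw [h1012, h1210, h1010, h1212]
  push_cast
  linear_combination (C 0 1 0 1 * s ^ 2 + C 0 2 0 2 * t ^ 2 : ℂ) * I_sq

/-- for s² + t² ≠ 0, ζ⁽¹⁾ = i(s,0,t)+(−t,0,s),
ζ⁽²⁾ = i(s,0,t)−(−t,0,s), a = (0,1,0) and C transversely isotropic (axis x₃),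
one has C_{ijkl} a_i ζ⁽¹⁾_j a_k ζ⁽²⁾_l = −(s²+t²)(C₁₂₁₂ + C₁₃₁₃). -/
theorem stmt_10 (s t : ℝ) (hst : s ^ 2 + t ^ 2 ≠ 0)
    (C : Fin 3 → Fin 3 → Fin 3 → Fin 3 → ℝ)
    (hsym1 : ∀ i j k l, C i j k l = C j i k l)
    (hsym2 : ∀ i j k l, C i j k l = C k l i j)
    (hinv : ∀ Q ∈ TIGroup, ∀ i j k l : Fin 3,
      (∑ p : Fin 3, ∑ q : Fin 3, ∑ r : Fin 3, ∑ s' : Fin 3,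
        Q i p * Q j q * Q k r * Q l s' * C p q r s') = C i j k l)
    (ζ1 ζ2 a : Fin 3 → ℂ)
    (hζ1 : ζ1 = ![Complex.I * s - t, 0, Complex.I * t + s])
    (hζ2 : ζ2 = ![Complex.I * s + t, 0, Complex.I * t - s])
    (ha : a = ![0, 1, 0]) :
    (∑ i : Fin 3, ∑ j : Fin 3, ∑ k : Fin 3, ∑ l : Fin 3,
        (C i j k l : ℂ) * a i * ζ1 j * a k * ζ2 l)
      = -((s ^ 2 + t ^ 2 : ℝ) : ℂ) * ((C 0 1 0 1 : ℝ) + (C 0 2 0 2 : ℝ)) :=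
  stmt_10_general s t C hinv ζ1 ζ2 a hζ1 hζ2 ha
end

section
/- For real s,t with s²+t² ≠ 0 and ζ⁽¹⁾ = i(s,0,t)+(−t,0,s), ζ⁽²⁾ = i(s,0,t)−(−t,0,s), and C transversely isotropic with axis x₃, the quantity C_{ijkl} ζ⁽¹⁾_i ζ⁽¹⁾_j ζ⁽²⁾_k ζ⁽²⁾_l equals (s²+t²)² (C_{1111} − 2C_{1133} + 4C_{1313} + C_{3333}). -/
open Complex

/-!
Both vectors lie in the x₁x₃-plane, so only the entries of `C` with indices in `{1, 3}` enter.
Invariance under the mirror `x₁ ↦ -x₁` kills every such entry with an odd number of indices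
equal to `1`, and the elastic symmetries identify the remaining ones with `C₁₁₁₁`, `C₁₁₃₃`,
`C₁₃₁₃`, `C₃₃₃₃`. Writing `ζ⁽¹⁾ = (a, 0, b)`, `ζ⁽²⁾ = (c, 0, d)`, the contraction becomes
`C₁₁₁₁ (ac)² + C₁₁₃₃ ((ad)² + (bc)²) + 4 C₁₃₁₃ (ac)(bd) + C₃₃₃₃ (bd)²`, and here
`ac = bd = -(s² + t²)` while `ad = -i (s² + t²)` and `bc = i (s² + t²)`.
-/

theorem Matrix.sum_diagonal_mul_tensor {R n : Type*} [CommSemiring R] [Fintype n] [DecidableEq n]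
    (d : n → R) (C : n → n → n → n → R) (i j k l : n) :
    ∑ p, ∑ q, ∑ r, ∑ s, diagonal d i p * diagonal d j q * diagonal d k r * diagonal d l s *
      C p q r s = d i * d j * d k * d l * C i j k l := by
  simp [diagonal_apply, ite_mul]

theorem diagonal_reflection_mem_TIGroup : Matrix.diagonal ![-1, 1, 1] ∈ TIGroup :=
  Or.inl (by simp)

theorem sum_tensor_mul_planar_of_mirror_symmetric {C : Fin 3 → Fin 3 → Fin 3 → Fin 3 → ℝ}
    (hsym1 : ∀ i j k l, C i j k l = C j i k l) (hsym2 : ∀ i j k l, C i j k l = C k l i j)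
    (hmirror : ∀ i j k l, ![-1, 1, 1] i * ![-1, 1, 1] j * ![-1, 1, 1] k * ![-1, 1, 1] l *
      C i j k l = C i j k l)
    (a b c d : ℂ) :
    ∑ i, ∑ j, ∑ k, ∑ l, (C i j k l : ℂ) * ![a, 0, b] i * ![a, 0, b] j * ![c, 0, d] k *
        ![c, 0, d] l
      = C 0 0 0 0 * (a * c) ^ 2 + C 0 0 2 2 * ((a * d) ^ 2 + (b * c) ^ 2)
          + 4 * C 0 2 0 2 * (a * c) * (b * d) + C 2 2 2 2 * (b * d) ^ 2 := by
  have hodd : ∀ i j k l,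
      ![(-1 : ℝ), 1, 1] i * ![-1, 1, 1] j * ![-1, 1, 1] k * ![-1, 1, 1] l = -1 → C i j k l = 0 := by
    intro i j k l h
    linarith [h ▸ hmirror i j k l]
  have h0002 := hodd 0 0 0 2 (by simp)
  have h0020 := hodd 0 0 2 0 (by simp)
  have h0200 := hodd 0 2 0 0 (by simp)
  have h2000 := hodd 2 0 0 0 (by simp)
  have h0222 := hodd 0 2 2 2 (by simp)
  have h2022 := hodd 2 0 2 2 (by simp)
  have h2202 := hodd 2 2 0 2 (by simp)
  have h2220 := hodd 2 2 2 0 (by simp)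
  have h2200 : C 2 2 0 0 = C 0 0 2 2 := hsym2 2 2 0 0
  have h2002 : C 2 0 0 2 = C 0 2 0 2 := hsym1 2 0 0 2
  have h0220 : C 0 2 2 0 = C 0 2 0 2 := (hsym2 0 2 2 0).trans h2002
  have h2020 : C 2 0 2 0 = C 0 2 0 2 := (hsym1 2 0 2 0).trans h0220
  simp only [Fin.sum_univ_three, Matrix.cons_val_zero, Matrix.cons_val_one, Matrix.cons_val_two,
    Matrix.head_cons, Matrix.tail_cons, h0002, h0020, h0200, h2000, h0222, h2022, h2202, h2220,
    h2200, h2002, h0220, h2020, ofReal_zero, zero_mul, mul_zero, add_zero, zero_add]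
  ring

theorem stmt_11_general (s t : ℝ)
    (C : Fin 3 → Fin 3 → Fin 3 → Fin 3 → ℝ)
    (hsym1 : ∀ i j k l, C i j k l = C j i k l)
    (hsym2 : ∀ i j k l, C i j k l = C k l i j)
    (hinv : ∀ Q ∈ TIGroup, ∀ i j k l : Fin 3,
      (∑ p : Fin 3, ∑ q : Fin 3, ∑ r : Fin 3, ∑ s' : Fin 3,
        Q i p * Q j q * Q k r * Q l s' * C p q r s') = C i j k l)
    (ζ1 ζ2 : Fin 3 → ℂ)
    (hζ1 : ζ1 = ![Complex.I * s - t, 0, Complex.I * t + s])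
    (hζ2 : ζ2 = ![Complex.I * s + t, 0, Complex.I * t - s]) :
    (∑ i : Fin 3, ∑ j : Fin 3, ∑ k : Fin 3, ∑ l : Fin 3,
        (C i j k l : ℂ) * ζ1 i * ζ1 j * ζ2 k * ζ2 l)
      = (((s ^ 2 + t ^ 2) ^ 2 : ℝ) : ℂ)
          * ((C 0 0 0 0 - 2 * C 0 0 2 2 + 4 * C 0 2 0 2 + C 2 2 2 2 : ℝ) : ℂ) := by
  have hmirror : ∀ i j k l, ![-1, 1, 1] i * ![-1, 1, 1] j * ![-1, 1, 1] k * ![-1, 1, 1] l *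
      C i j k l = C i j k l := fun i j k l => by
    simpa only [Matrix.sum_diagonal_mul_tensor] using
      hinv _ diagonal_reflection_mem_TIGroup i j k l
  have hac : (I * s - t) * (I * s + t) = -(s ^ 2 + t ^ 2 : ℝ) := by
    push_cast; linear_combination s ^ 2 * I_sq
  have hbd : (I * t + s) * (I * t - s) = -(s ^ 2 + t ^ 2 : ℝ) := by
    push_cast; linear_combination t ^ 2 * I_sq
  have had : (I * s - t) * (I * t - s) = -I * (s ^ 2 + t ^ 2 : ℝ) := by
    push_cast; linear_combination s * t * I_sq
  have hbc : (I * t + s) * (I * s + t) = I * (s ^ 2 + t ^ 2 : ℝ) := by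
    push_cast; linear_combination s * t * I_sq
  subst hζ1 hζ2
  rw [sum_tensor_mul_planar_of_mirror_symmetric hsym1 hsym2 hmirror, hac, hbd, had, hbc]
  push_cast
  linear_combination (2 * C 0 0 2 2 * (s ^ 2 + t ^ 2 : ℂ) ^ 2) * I_sq

/-- for s² + t² ≠ 0, ζ⁽¹⁾ = i(s,0,t)+(−t,0,s),
ζ⁽²⁾ = i(s,0,t)−(−t,0,s) and C transversely isotropic (axis x₃) with the
elastic symmetries, one has
C_{ijkl} ζ⁽¹⁾_i ζ⁽¹⁾_j ζ⁽²⁾_k ζ⁽²⁾_l = (s²+t²)²(C₁₁₁₁ − 2C₁₁₃₃ + 4C₁₃₁₃ + C₃₃₃₃). -/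
theorem stmt_11 (s t : ℝ) (hst : s ^ 2 + t ^ 2 ≠ 0)
    (C : Fin 3 → Fin 3 → Fin 3 → Fin 3 → ℝ)
    (hsym1 : ∀ i j k l, C i j k l = C j i k l)
    (hsym2 : ∀ i j k l, C i j k l = C k l i j)
    (hinv : ∀ Q ∈ TIGroup, ∀ i j k l : Fin 3,
      (∑ p : Fin 3, ∑ q : Fin 3, ∑ r : Fin 3, ∑ s' : Fin 3,
        Q i p * Q j q * Q k r * Q l s' * C p q r s') = C i j k l)
    (ζ1 ζ2 : Fin 3 → ℂ)
    (hζ1 : ζ1 = ![Complex.I * s - t, 0, Complex.I * t + s])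
    (hζ2 : ζ2 = ![Complex.I * s + t, 0, Complex.I * t - s]) :
    (∑ i : Fin 3, ∑ j : Fin 3, ∑ k : Fin 3, ∑ l : Fin 3,
        (C i j k l : ℂ) * ζ1 i * ζ1 j * ζ2 k * ζ2 l)
      = (((s ^ 2 + t ^ 2) ^ 2 : ℝ) : ℂ)
          * ((C 0 0 0 0 - 2 * C 0 0 2 2 + 4 * C 0 2 0 2 + C 2 2 2 2 : ℝ) : ℂ) :=
  stmt_11_general s t C hsym1 hsym2 hinv ζ1 ζ2 hζ1 hζ2
end

section
/- Suppose C is a transversely isotropic tensor field whose components satisfy C₁₃₁₃ = C₁₂₁₂ = 0, C₁₁₁₁ = C₁₁₂₂, and 2C₁₁₃₃ = C₁₁₂₂ + C₃₃₃₃ pointwise. Then for any differentiable vector fields u, v: ℝ³ → ℂ³, the bilinear form C_{ijkl} ∂_i u_j ∂_k v_l equals C₁₁₁₁ (∇·u)(∇·v) + (C₁₁₃₃ − C₁₁₁₁)((∇·u) ∂₃v₃ + ∂₃u₃ (∇·v)). -/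
/-!
With `n = e₃`, `λ = C₁₁₁₁` and `μ = C₁₁₃₃ − C₁₁₁₁`, the zero pattern of a transversely isotropic
tensor, its symmetries and the relations `C₁₃₁₃ = C₁₂₁₂ = 0`, `C₁₁₁₁ = C₁₁₂₂`,
`2C₁₁₃₃ = C₁₁₂₂ + C₃₃₃₃` leave only
`C_{ijkl} = λ δ_{ij} δ_{kl} + μ (δ_{ij} n_k n_l + n_i n_j δ_{kl})`.
Contracting this tensor with `∂_i u_j` and `∂_k v_l` gives the formula, pointwise and purely
algebraically.
-/

open Complex

open Finset

def axialTensor {n : ℕ} (p : Fin n) (lam mu : ℝ) (i j k l : Fin n) : ℝ :=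
  lam * (if i = j then 1 else 0) * (if k = l then 1 else 0)
    + mu * ((if i = j then 1 else 0) * (if k = p ∧ l = p then 1 else 0)
      + (if i = p ∧ j = p then 1 else 0) * (if k = l then 1 else 0))

theorem sum_axialTensor_mul_mul {n : ℕ} (p : Fin n) (lam mu : ℝ) (a b : Fin n → Fin n → ℂ) :
    ∑ i, ∑ j, ∑ k, ∑ l, (axialTensor p lam mu i j k l : ℂ) * a i j * b k l
      = lam * (∑ j, a j j) * (∑ j, b j j)
        + mu * ((∑ j, a j j) * b p p + a p p * (∑ j, b j j)) := by
  push_cast [axialTensor, apply_ite Complex.ofReal, ite_and]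
  simp only [add_mul, mul_add, sum_add_distrib, mul_assoc, boole_mul, ← mul_sum]
  simp only [ite_mul, one_mul, zero_mul, sum_ite_irrel, sum_ite_eq, sum_ite_eq', mem_univ, ↓reduceIte,
    sum_const_zero, mul_sum, sum_mul, add_left_inj]
  exact sum_comm

theorem eq_axialTensor_of_transverselyIsotropic (T : Fin 3 → Fin 3 → Fin 3 → Fin 3 → ℝ)
    (hsym1 : ∀ i j k l, T i j k l = T j i k l)
    (hsym2 : ∀ i j k l, T i j k l = T k l i j)
    (hodd : ∀ i j k l : Fin 3,
      (∃ m : Fin 3, ¬ Even (([i, j, k, l] : List (Fin 3)).count m)) → T i j k l = 0)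
    (hti1 : T 1 1 1 1 = T 0 0 0 0) (hti2 : T 1 1 2 2 = T 0 0 2 2)
    (hti3 : T 1 2 1 2 = T 0 2 0 2)
    (h1 : T 0 2 0 2 = 0) (h2 : T 0 1 0 1 = 0) (h3 : T 0 0 0 0 = T 0 0 1 1)
    (h4 : 2 * T 0 0 2 2 = T 0 0 1 1 + T 2 2 2 2) :
    T = axialTensor 2 (T 0 0 0 0) (T 0 0 2 2 - T 0 0 0 0) := by
  ext i j k l
  fin_cases i <;> fin_cases j <;> fin_cases k <;> fin_cases l <;>
    simp only [axialTensor, Fin.zero_eta, Fin.mk_one, Fin.isValue, Fin.reduceFinMk, Fin.reduceEq,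
      zero_ne_one, one_ne_zero, and_self, and_true, and_false, ↓reduceIte, mul_one, mul_zero, add_zero,
      zero_add, add_sub_cancel] <;>
    first
    | exact hodd _ _ _ _ (by decide)
    | grind

-- Indices 1, 2, 3 of the paper are `0, 1, 2 : Fin 3`.
theorem stmt_15_general (C : (Fin 3 → ℝ) → Fin 3 → Fin 3 → Fin 3 → Fin 3 → ℝ)
    (hsym1 : ∀ x i j k l, C x i j k l = C x j i k l)
    (hsym2 : ∀ x i j k l, C x i j k l = C x k l i j)
    -- only the transversely isotropic components are nonzero
    (hodd : ∀ x, ∀ i j k l : Fin 3,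
      (∃ m : Fin 3, ¬ Even (([i, j, k, l] : List (Fin 3)).count m)) → C x i j k l = 0)
    (hti1 : ∀ x, C x 1 1 1 1 = C x 0 0 0 0)
    (hti2 : ∀ x, C x 1 1 2 2 = C x 0 0 2 2)
    (hti3 : ∀ x, C x 1 2 1 2 = C x 0 2 0 2)
    -- the relations obtained from the CGO solutions
    (h1 : ∀ x, C x 0 2 0 2 = 0)
    (h2 : ∀ x, C x 0 1 0 1 = 0)
    (h3 : ∀ x, C x 0 0 0 0 = C x 0 0 1 1)
    (h4 : ∀ x, 2 * C x 0 0 2 2 = C x 0 0 1 1 + C x 2 2 2 2)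
    (u v : (Fin 3 → ℝ) → Fin 3 → ℂ) :
    ∀ x : Fin 3 → ℝ,
      (∑ i : Fin 3, ∑ j : Fin 3, ∑ k : Fin 3, ∑ l : Fin 3,
          (C x i j k l : ℂ) * pd i (fun y => u y j) x * pd k (fun y => v y l) x)
        = (C x 0 0 0 0 : ℂ) * (∑ j : Fin 3, pd j (fun y => u y j) x)
              * (∑ j : Fin 3, pd j (fun y => v y j) x)
          + ((C x 0 0 2 2 : ℝ) - (C x 0 0 0 0 : ℝ) : ℝ)
              * ((∑ j : Fin 3, pd j (fun y => u y j) x) * pd 2 (fun y => v y 2) x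
                + pd 2 (fun y => u y 2) x * (∑ j : Fin 3, pd j (fun y => v y j) x)) := by
  intro x
  have hC := eq_axialTensor_of_transverselyIsotropic (C x) (hsym1 x) (hsym2 x) (hodd x) (hti1 x)
    (hti2 x) (hti3 x) (h1 x) (h2 x) (h3 x) (h4 x)
  have := sum_axialTensor_mul_mul 2 (C x 0 0 0 0) (C x 0 0 2 2 - C x 0 0 0 0)
    (fun i j => pd i (fun y => u y j) x) (fun i j => pd i (fun y => v y j) x)
  rwa [← hC] at this

/-- for a transversely isotropic tensor field C with
C₁₃₁₃ = C₁₂₁₂ = 0, C₁₁₁₁ = C₁₁₂₂ and 2C₁₁₃₃ = C₁₁₂₂ + C₃₃₃₃ pointwise, and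
differentiable u, v : ℝ³ → ℂ³, the bilinear form C_{ijkl} ∂_i u_j ∂_k v_l
equals C₁₁₁₁(∇·u)(∇·v) + (C₁₁₃₃ − C₁₁₁₁)((∇·u)∂₃v₃ + ∂₃u₃(∇·v)).
(Indices 1,2,3 correspond to 0,1,2 : Fin 3.) -/
theorem stmt_15 (C : (Fin 3 → ℝ) → Fin 3 → Fin 3 → Fin 3 → Fin 3 → ℝ)
    (hsym1 : ∀ x i j k l, C x i j k l = C x j i k l)
    (hsym2 : ∀ x i j k l, C x i j k l = C x k l i j)
    -- only the transversely isotropic components are nonzero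
    (hodd : ∀ x, ∀ i j k l : Fin 3,
      (∃ m : Fin 3, ¬ Even (([i, j, k, l] : List (Fin 3)).count m)) → C x i j k l = 0)
    (hti1 : ∀ x, C x 1 1 1 1 = C x 0 0 0 0)
    (hti2 : ∀ x, C x 1 1 2 2 = C x 0 0 2 2)
    (hti3 : ∀ x, C x 1 2 1 2 = C x 0 2 0 2)
    (hti4 : ∀ x, C x 0 1 0 1 = (C x 0 0 0 0 - C x 0 0 1 1) / 2)
    -- the relations obtained from the CGO solutions
    (h1 : ∀ x, C x 0 2 0 2 = 0)
    (h2 : ∀ x, C x 0 1 0 1 = 0)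
    (h3 : ∀ x, C x 0 0 0 0 = C x 0 0 1 1)
    (h4 : ∀ x, 2 * C x 0 0 2 2 = C x 0 0 1 1 + C x 2 2 2 2)
    (u v : (Fin 3 → ℝ) → Fin 3 → ℂ)
    (hu : ∀ j, Differentiable ℝ (fun x => u x j))
    (hv : ∀ j, Differentiable ℝ (fun x => v x j)) :
    ∀ x : Fin 3 → ℝ,
      (∑ i : Fin 3, ∑ j : Fin 3, ∑ k : Fin 3, ∑ l : Fin 3,
          (C x i j k l : ℂ) * pd i (fun y => u y j) x * pd k (fun y => v y l) x)
        = (C x 0 0 0 0 : ℂ) * (∑ j : Fin 3, pd j (fun y => u y j) x)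
              * (∑ j : Fin 3, pd j (fun y => v y j) x)
          + ((C x 0 0 2 2 : ℝ) - (C x 0 0 0 0 : ℝ) : ℝ)
              * ((∑ j : Fin 3, pd j (fun y => u y j) x) * pd 2 (fun y => v y 2) x
                + pd 2 (fun y => u y 2) x * (∑ j : Fin 3, pd j (fun y => v y j) x)) :=
  stmt_15_general C hsym1 hsym2 hodd hti1 hti2 hti3 h1 h2 h3 h4 u v
end
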